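/- arXiv:1602.05310 — 2 statements merged into one kernel-verified Lean document; each statement's English description precedes it below -/
import Mathlib

section
/- Let f : ℝ^d → ℝ be a quadratic function whose Hessian H = ∇²f satisfies m I ⪯ H ⪯ L I with 0 < m ≤ L. Let w^τ be the τ-th iterate of block coordinate descent where each block I_τ consists of b indices drawn uniformly without replacement from {1,...,d}, with exact block minimization. Then E[f(w^τ)] − f_* ≤ (1 − m/(2 L_eff))^τ (f(w^0) − f_*), where L_eff := e² L + (d log(2d²/b)/b)·‖diag(H)‖_∞. -/
/-!
Write `g = H w + c` for the gradient at `w` and `π = b / d`. Exact minimisation over a block `J`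
does at least as well as the gradient step `w - t g` restricted to `J`. Averaged over the uniform
`b`-subsets `J`, a coordinate lies in `J` with probability `π` and a pair of distinct coordinates
with probability `b (b - 1) / (d (d - 1)) ≤ π²`, so the quadratic term of that step splits into a
full part, bounded through `H ⪯ L`, and a diagonal part, bounded through `max |Hᵢᵢ| =: Λ`.
Optimising `t` gives an expected decrease `‖g‖² / (2 L')` with `L' = L + d Λ / b ≤ 2 L_eff`, and
strong convexity, `‖g‖² ≥ 2 m (f w - f_*)`, turns it into the contraction factor
`1 - m / (2 L_eff)`. Independence of the blocks across steps multiplies these factors.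
-/

open Matrix Finset

/-- Coordinate projection matrix onto the index set `I`. -/
noncomputable def proj {ι : Type*} [Fintype ι] [DecidableEq ι]
    (I : Finset ι) : Matrix ι ι ℝ :=
  Matrix.diagonal (fun i => if i ∈ I then 1 else 0)

section Blocks

variable {α : Type*} [Fintype α] [DecidableEq α]

theorem sum_sum_mem_eq_sum_sum_filter_mem {M : Type*} [AddCommMonoid M]
    (𝒥 : Finset (Finset α)) (F : Finset α → α → M) :
    ∑ J ∈ 𝒥, ∑ i ∈ J, F J i = ∑ i, ∑ J ∈ 𝒥 with i ∈ J, F J i :=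
  Finset.sum_comm' fun _ _ => by simp [and_comm]

theorem card_powersetCard_filter_superset {K : Finset α} {b : ℕ} (hK : #K ≤ b) :
    #{J ∈ powersetCard b univ | K ⊆ J} = (Fintype.card α - #K).choose (b - #K) := by
  rw [← card_compl, ← card_powersetCard]
  apply card_nbij' (· \ K) (· ∪ K)
  · intro J hJ
    simp only [mem_coe, mem_filter, mem_powersetCard] at hJ ⊢
    exact ⟨fun x hx => by simp [(mem_sdiff.1 hx).2], by rw [card_sdiff_of_subset hJ.2, hJ.1.2]⟩
  · intro J hJ
    simp only [mem_coe, mem_filter, mem_powersetCard] at hJ ⊢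
    have hdisj : Disjoint J K := by simpa [← subset_compl_iff_disjoint_right] using hJ.1
    refine ⟨⟨subset_univ _, ?_⟩, subset_union_right⟩
    rw [card_union_of_disjoint hdisj, hJ.2]
    omega
  · intro J hJ
    exact sdiff_union_of_subset (mem_filter.1 hJ).2
  · intro J hJ
    exact union_sdiff_cancel_right (subset_compl_iff_disjoint_right.1 (mem_powersetCard.1 hJ).1)

theorem card_powersetCard_filter_superset_mul_choose (K : Finset α) (b : ℕ) :
    #{J ∈ powersetCard b univ | K ⊆ J} * (Fintype.card α).choose #K =
      (Fintype.card α).choose b * b.choose #K := by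
  rcases lt_or_ge b #K with hbK | hKb
  · have : ({J ∈ powersetCard b univ | K ⊆ J} : Finset (Finset α)) = ∅ :=
      filter_eq_empty_iff.2 fun J hJ hKJ =>
        ((card_le_card hKJ).trans (mem_powersetCard.1 hJ).2.le).not_gt hbK
    simp [this, Nat.choose_eq_zero_of_lt hbK]
  · rw [card_powersetCard_filter_superset hKb, Nat.choose_mul hKb, mul_comm]

theorem card_powersetCard_filter_mem (b : ℕ) (i : α) :
    (#{J ∈ powersetCard b univ | i ∈ J} : ℝ) =
      (Fintype.card α).choose b * (b / Fintype.card α) := by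
  have : Nonempty α := ⟨i⟩
  have hn : (Fintype.card α : ℝ) ≠ 0 := by exact_mod_cast Fintype.card_ne_zero
  have h := card_powersetCard_filter_superset_mul_choose {i} b
  simp only [singleton_subset_iff, card_singleton, Nat.choose_one_right] at h
  rw [mul_div_assoc', eq_div_iff hn]
  exact_mod_cast h

theorem card_powersetCard_filter_mem_mem (b : ℕ) {i j : α} (hij : i ≠ j) :
    (#{J ∈ powersetCard b univ | i ∈ J ∧ j ∈ J} : ℝ) =
      (Fintype.card α).choose b *
        (b * (b - 1) / (Fintype.card α * (Fintype.card α - 1))) := by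
  have h2 : #{i, j} = 2 := card_pair hij
  have hn : 2 ≤ Fintype.card α := h2 ▸ card_le_univ _
  have hn' : (Fintype.card α : ℝ) * (Fintype.card α - 1) ≠ 0 := by
    have : (2 : ℝ) ≤ Fintype.card α := by exact_mod_cast hn
    exact mul_ne_zero (by linarith) (by linarith)
  have h := card_powersetCard_filter_superset_mul_choose {i, j} b
  simp only [insert_subset_iff, singleton_subset_iff, h2] at h
  have h' := congrArg (fun k : ℕ => (k : ℝ)) h
  simp only [Nat.cast_mul, Nat.cast_choose_two] at h'
  rw [mul_div_assoc', eq_div_iff hn']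
  linarith

theorem sum_powersetCard_sum_mem (b : ℕ) (F : α → ℝ) :
    ∑ J ∈ powersetCard b univ, ∑ i ∈ J, F i =
      (Fintype.card α).choose b * (b / Fintype.card α) * ∑ i, F i := by
  rw [sum_sum_mem_eq_sum_sum_filter_mem, mul_sum]
  refine sum_congr rfl fun i _ => ?_
  rw [sum_const, nsmul_eq_mul, card_powersetCard_filter_mem]

/-- When `card α ≤ 1` the pair term vanishes through `x / 0 = 0`, as it should: there are no
pairs of distinct points. -/
theorem sum_powersetCard_sum_mem_sum_mem (b : ℕ) (a : α → α → ℝ) :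
    ∑ J ∈ powersetCard b univ, ∑ i ∈ J, ∑ j ∈ J, a i j =
      (Fintype.card α).choose b *
        (b * (b - 1) / (Fintype.card α * (Fintype.card α - 1)) * ∑ i, ∑ j, a i j +
          (b / Fintype.card α - b * (b - 1) / (Fintype.card α * (Fintype.card α - 1))) *
            ∑ i, a i i) := by
  set p₂ : ℝ := b * (b - 1) / (Fintype.card α * (Fintype.card α - 1))
  have hcount : ∀ i j : α, (#{J ∈ powersetCard b univ | i ∈ J ∧ j ∈ J} : ℝ) =
      (Fintype.card α).choose b * (p₂ + if i = j then b / Fintype.card α - p₂ else 0) := by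
    intro i j
    rcases eq_or_ne i j with rfl | hij
    · simp only [and_self, if_true, card_powersetCard_filter_mem]
      ring
    · simp only [card_powersetCard_filter_mem_mem b hij, hij, if_false, add_zero, p₂]
  calc ∑ J ∈ powersetCard b univ, ∑ i ∈ J, ∑ j ∈ J, a i j
      = ∑ i, ∑ j, #{J ∈ powersetCard b (univ : Finset α) | i ∈ J ∧ j ∈ J} • a i j := by
        rw [sum_sum_mem_eq_sum_sum_filter_mem]
        refine sum_congr rfl fun i _ => ?_
        rw [sum_sum_mem_eq_sum_sum_filter_mem]
        simp only [filter_filter, sum_const]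
    _ = _ := by
        simp only [nsmul_eq_mul, hcount, mul_add, add_mul, sum_add_distrib, ite_mul, zero_mul,
          sum_ite_eq, mem_univ, if_true, ← mul_sum, mul_assoc]

theorem natCast_mul_sub_one_nonneg (k : ℕ) : 0 ≤ (k : ℝ) * (k - 1) := by
  rcases k with _ | k
  · simp
  · rw [Nat.cast_succ, add_sub_cancel_right]
    positivity

theorem mul_sub_one_div_mul_sub_one_le_sq {b n : ℕ} (hbn : b ≤ n) :
    (b : ℝ) * (b - 1) / (n * (n - 1)) ≤ (b / n) ^ 2 := by
  rcases le_or_gt n 1 with hn | hn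
  · have : (n : ℝ) * (n - 1) = 0 := by interval_cases n <;> simp
    rw [this, div_zero]
    positivity
  · have hn' : (1 : ℝ) < n := by exact_mod_cast hn
    have hbn' : (b : ℝ) ≤ n := by exact_mod_cast hbn
    rw [div_pow, div_le_div_iff₀ (by nlinarith) (by positivity)]
    nlinarith [mul_nonneg (mul_nonneg (Nat.cast_nonneg (α := ℝ) b) (Nat.cast_nonneg (α := ℝ) n))
      (sub_nonneg.2 hbn')]

theorem sum_powersetCard_quadForm_le {b : ℕ} (hbn : b ≤ Fintype.card α) {H : Matrix α α ℝ}
    {L Λ : ℝ} (hL : 0 ≤ L) (hΛ : 0 ≤ Λ) (hup : ∀ x, x ⬝ᵥ H *ᵥ x ≤ L * (x ⬝ᵥ x))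
    (hdiag : ∀ i, H i i ≤ Λ) (x : α → ℝ) :
    ∑ J ∈ powersetCard b univ, ∑ i ∈ J, ∑ j ∈ J, x i * H i j * x j ≤
      (Fintype.card α).choose b * (b / Fintype.card α) *
        (b / Fintype.card α * L + Λ) * (x ⬝ᵥ x) := by
  rw [sum_powersetCard_sum_mem_sum_mem]
  set n := Fintype.card α
  set π : ℝ := b / n
  set p₂ : ℝ := b * (b - 1) / (n * (n - 1))
  have hπ0 : 0 ≤ π := by positivity
  have hπ1 : π ≤ 1 := div_le_one_of_le₀ (by exact_mod_cast hbn) (Nat.cast_nonneg n)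
  have hp₂0 : 0 ≤ p₂ := div_nonneg (natCast_mul_sub_one_nonneg b) (natCast_mul_sub_one_nonneg n)
  have hp₂ : p₂ ≤ π * π := (mul_sub_one_div_mul_sub_one_le_sq hbn).trans_eq (sq π)
  have hG : 0 ≤ x ⬝ᵥ x := by
    simpa only [dotProduct] using sum_nonneg fun i _ => mul_self_nonneg (x i)
  have hQ : ∑ i, ∑ j, x i * H i j * x j ≤ L * (x ⬝ᵥ x) := by
    convert hup x using 1
    simp only [dotProduct, mulVec, mul_sum, mul_assoc]
  have hD : ∑ i, x i * H i i * x i ≤ Λ * (x ⬝ᵥ x) := by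
    rw [dotProduct, mul_sum]
    refine sum_le_sum fun i _ => ?_
    nlinarith [hdiag i, mul_self_nonneg (x i)]
  calc _ ≤ (n.choose b : ℝ) * (p₂ * (L * (x ⬝ᵥ x)) + (π - p₂) * (Λ * (x ⬝ᵥ x))) := by
        gcongr
        nlinarith
    _ ≤ _ := by
        rw [mul_assoc _ π, mul_assoc]
        gcongr
        nlinarith [mul_nonneg hL hG, mul_nonneg hΛ hG]

end Blocks

section Quadratic

variable {ι : Type*}

theorem isSymm_of_posSemidef_sub_smul_one [DecidableEq ι] {H : Matrix ι ι ℝ} {m : ℝ}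
    (hlow : (H - m • 1).PosSemidef) : H.IsSymm := by
  simpa using (isHermitian_iff_isSymm.1 hlow.isHermitian).add (isSymm_one.smul m)

variable [Fintype ι]

noncomputable def quadratic (H : Matrix ι ι ℝ) (c : ι → ℝ) (r : ℝ) (w : ι → ℝ) : ℝ :=
  1 / 2 * (w ⬝ᵥ H *ᵥ w) + c ⬝ᵥ w + r

variable {H : Matrix ι ι ℝ} {c : ι → ℝ} {r : ℝ}

theorem quadratic_add (hH : H.IsSymm) (w u : ι → ℝ) :
    quadratic H c r (w + u) =
      quadratic H c r w + u ⬝ᵥ (H *ᵥ w + c) + 1 / 2 * (u ⬝ᵥ H *ᵥ u) := by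
  have hsymm : w ⬝ᵥ H *ᵥ u = u ⬝ᵥ H *ᵥ w := by
    rw [dotProduct_mulVec, ← mulVec_transpose, hH.eq, dotProduct_comm]
  simp only [quadratic, mulVec_add, dotProduct_add, add_dotProduct, hsymm, dotProduct_comm c u]
  ring

variable [DecidableEq ι]

theorem proj_mulVec_apply (J : Finset ι) (x : ι → ℝ) (i : ι) :
    (proj J *ᵥ x) i = if i ∈ J then x i else 0 := by
  simp [proj, mulVec_diagonal]

theorem proj_mulVec_dotProduct (J : Finset ι) (x y : ι → ℝ) :
    (proj J *ᵥ x) ⬝ᵥ y = ∑ i ∈ J, x i * y i := by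
  simp [dotProduct, proj_mulVec_apply, ite_mul, sum_ite_mem]

theorem proj_mulVec_dotProduct_mulVec_proj_mulVec (J : Finset ι) (A : Matrix ι ι ℝ)
    (x y : ι → ℝ) :
    (proj J *ᵥ x) ⬝ᵥ A *ᵥ (proj J *ᵥ y) = ∑ i ∈ J, ∑ j ∈ J, x i * A i j * y j := by
  rw [proj_mulVec_dotProduct]
  refine sum_congr rfl fun i _ => ?_
  rw [mulVec, dotProduct_comm, proj_mulVec_dotProduct, mul_sum]
  exact sum_congr rfl fun j _ => by ring

theorem le_dotProduct_mulVec_of_posSemidef {m : ℝ} (hlow : (H - m • 1).PosSemidef)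
    (x : ι → ℝ) : m * (x ⬝ᵥ x) ≤ x ⬝ᵥ H *ᵥ x := by
  have h := hlow.dotProduct_mulVec_nonneg x
  simp only [star_trivial, sub_mulVec, smul_mulVec, one_mulVec, dotProduct_sub,
    dotProduct_smul, smul_eq_mul] at h
  linarith

theorem dotProduct_mulVec_le_of_posSemidef {L : ℝ} (hup : (L • 1 - H).PosSemidef)
    (x : ι → ℝ) : x ⬝ᵥ H *ᵥ x ≤ L * (x ⬝ᵥ x) := by
  have h := hup.dotProduct_mulVec_nonneg x
  simp only [star_trivial, sub_mulVec, smul_mulVec, one_mulVec, dotProduct_sub,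
    dotProduct_smul, smul_eq_mul] at h
  linarith

theorem quadratic_sub_smul_proj_mulVec (hH : H.IsSymm) (w x : ι → ℝ) (t : ℝ)
    (J : Finset ι) :
    quadratic H c r (w - t • proj J *ᵥ x) =
      quadratic H c r w - t * ∑ i ∈ J, x i * (H *ᵥ w + c) i +
        t ^ 2 / 2 * ∑ i ∈ J, ∑ j ∈ J, x i * H i j * x j := by
  rw [sub_eq_add_neg, ← neg_smul, quadratic_add hH, mulVec_smul, smul_dotProduct,
    dotProduct_smul, smul_dotProduct, proj_mulVec_dotProduct,
    proj_mulVec_dotProduct_mulVec_proj_mulVec]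
  simp only [smul_eq_mul]
  ring

theorem quadratic_sub_le_of_isGLB {m fstar : ℝ} (hm : 0 < m) (hlow : (H - m • 1).PosSemidef)
    (hstar : IsGLB (Set.range (quadratic H c r)) fstar) (w : ι → ℝ) :
    quadratic H c r w - fstar ≤ (H *ᵥ w + c) ⬝ᵥ (H *ᵥ w + c) / (2 * m) := by
  set g := H *ᵥ w + c
  suffices h : ∀ v, quadratic H c r w - g ⬝ᵥ g / (2 * m) ≤ quadratic H c r v by
    linarith [hstar.2 (Set.forall_mem_range.2 h)]
  intro v
  obtain ⟨u, rfl⟩ : ∃ u, v = w + u := ⟨v - w, by abel⟩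
  rw [quadratic_add (isSymm_of_posSemidef_sub_smul_one hlow)]
  have hHu := le_dotProduct_mulVec_of_posSemidef hlow u
  have hsq : 0 ≤ (m • u + g) ⬝ᵥ (m • u + g) := by
    simpa only [dotProduct] using sum_nonneg fun i _ => mul_self_nonneg ((m • u + g) i)
  simp only [add_dotProduct, dotProduct_add, smul_dotProduct, dotProduct_smul, smul_eq_mul,
    dotProduct_comm g u] at hsq
  have : -(u ⬝ᵥ g) - m / 2 * (u ⬝ᵥ u) ≤ g ⬝ᵥ g / (2 * m) := by
    rw [le_div_iff₀ (by positivity)]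
    nlinarith
  linarith

theorem sum_powersetCard_quadratic_le {b : ℕ} (hb : 1 ≤ b) (hbn : b ≤ Fintype.card ι)
    {L Λ : ℝ} (hL : 0 < L) (hΛ : 0 ≤ Λ) (hH : H.IsSymm) (hup : (L • 1 - H).PosSemidef)
    (hdiag : ∀ i, H i i ≤ Λ) (w : ι → ℝ) (u : Finset ι → ι → ℝ)
    (hu : ∀ J (v : ι → ℝ), quadratic H c r (u J) ≤
      quadratic H c r (fun i => if i ∈ J then v i else w i)) :
    ∑ J ∈ powersetCard b univ, quadratic H c r (u J) ≤
      (Fintype.card ι).choose b * (quadratic H c r w -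
        (H *ᵥ w + c) ⬝ᵥ (H *ᵥ w + c) / (2 * (L + Fintype.card ι * Λ / b))) := by
  set n := Fintype.card ι
  set g := H *ᵥ w + c
  set π : ℝ := b / n
  set L' := L + n * Λ / b
  have hn : (0 : ℝ) < n := by exact_mod_cast hb.trans hbn
  have hπ : 0 < π := by positivity
  have hL' : 0 < L' := by positivity
  have hπL' : π * (π * L + Λ) = π ^ 2 * L' := by
    simp only [π, L']
    field_simp
  -- the step size minimising the averaged upper bound below
  set t := 1 / (π * L')
  have hblock : ∀ J, quadratic H c r (u J) ≤ quadratic H c r w -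
      t * ∑ i ∈ J, g i * g i + t ^ 2 / 2 * ∑ i ∈ J, ∑ j ∈ J, g i * H i j * g j := by
    intro J
    rw [← quadratic_sub_smul_proj_mulVec hH]
    convert hu J (w - t • g) using 2
    ext i
    by_cases hi : i ∈ J <;> simp [proj_mulVec_apply, hi]
  calc ∑ J ∈ powersetCard b univ, quadratic H c r (u J)
      ≤ ∑ J ∈ powersetCard b univ, (quadratic H c r w - t * ∑ i ∈ J, g i * g i +
          t ^ 2 / 2 * ∑ i ∈ J, ∑ j ∈ J, g i * H i j * g j) := sum_le_sum fun J _ => hblock J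
    _ = n.choose b * quadratic H c r w - t * (n.choose b * π * (g ⬝ᵥ g)) +
          t ^ 2 / 2 * ∑ J ∈ powersetCard b univ, ∑ i ∈ J, ∑ j ∈ J, g i * H i j * g j := by
        rw [sum_add_distrib, sum_sub_distrib, ← mul_sum, ← mul_sum, sum_powersetCard_sum_mem,
          sum_const, card_powersetCard, card_univ, nsmul_eq_mul, dotProduct]
    _ ≤ n.choose b * quadratic H c r w - t * (n.choose b * π * (g ⬝ᵥ g)) +
          t ^ 2 / 2 * (n.choose b * π * (π * L + Λ) * (g ⬝ᵥ g)) := by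
        gcongr
        exact sum_powersetCard_quadForm_le hbn hL.le hΛ
          (dotProduct_mulVec_le_of_posSemidef hup) hdiag g
    _ = n.choose b * quadratic H c r w - t * (n.choose b * π * (g ⬝ᵥ g)) +
          t ^ 2 / 2 * (n.choose b * (π ^ 2 * L') * (g ⬝ᵥ g)) := by
        rw [← hπL']
        ring
    _ = _ := by
        simp only [t]
        field_simp
        ring

theorem sum_powersetCard_quadratic_sub_le {b : ℕ} (hb : 1 ≤ b) (hbn : b ≤ Fintype.card ι)
    {m L Λ fstar : ℝ} (hm : 0 < m) (hL : 0 < L) (hΛ : 0 ≤ Λ) (hlow : (H - m • 1).PosSemidef)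
    (hup : (L • 1 - H).PosSemidef) (hdiag : ∀ i, H i i ≤ Λ)
    (hstar : IsGLB (Set.range (quadratic H c r)) fstar) (w : ι → ℝ) (u : Finset ι → ι → ℝ)
    (hu : ∀ J (v : ι → ℝ), quadratic H c r (u J) ≤
      quadratic H c r (fun i => if i ∈ J then v i else w i)) :
    ∑ J ∈ powersetCard b univ, (quadratic H c r (u J) - fstar) ≤
      (Fintype.card ι).choose b * (1 - m / (L + Fintype.card ι * Λ / b)) *
        (quadratic H c r w - fstar) := by
  have hdescent := sum_powersetCard_quadratic_le hb hbn hL hΛ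
    (isSymm_of_posSemidef_sub_smul_one hlow) hup hdiag w u hu
  have hgrad := quadratic_sub_le_of_isGLB hm hlow hstar w
  set N : ℝ := ((Fintype.card ι).choose b : ℝ)
  set L' := L + Fintype.card ι * Λ / b
  set G := (H *ᵥ w + c) ⬝ᵥ (H *ᵥ w + c)
  have hL' : 0 < L' := by positivity
  have hgrad' : m / L' * (quadratic H c r w - fstar) ≤ G / (2 * L') :=
    calc m / L' * (quadratic H c r w - fstar) ≤ m / L' * (G / (2 * m)) := by gcongr
      _ = G / (2 * L') := by field_simp
  calc ∑ J ∈ powersetCard b univ, (quadratic H c r (u J) - fstar)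
      = ∑ J ∈ powersetCard b univ, quadratic H c r (u J) - N * fstar := by
        rw [sum_sub_distrib, sum_const, card_powersetCard, card_univ, nsmul_eq_mul]
    _ ≤ N * ((quadratic H c r w - fstar) - G / (2 * L')) := by linarith
    _ ≤ N * ((quadratic H c r w - fstar) - m / L' * (quadratic H c r w - fstar)) := by gcongr
    _ = _ := by ring

end Quadratic

theorem sum_piFinset_le_pow_mul {X β : Type*} (Ω : Finset β) (step : β → X → X) (φ : X → ℝ)
    {K : ℝ} (hK : 0 ≤ K) (hstep : ∀ x, ∑ J ∈ Ω, φ (step J x) ≤ K * φ x) (τ : ℕ) (x₀ : X)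
    (W : (Fin τ → β) → ℕ → X) (hW0 : ∀ s, W s 0 = x₀)
    (hWsucc : ∀ s k (hk : k < τ), W s (k + 1) = step (s ⟨k, hk⟩) (W s k)) :
    ∑ s ∈ Fintype.piFinset (fun _ : Fin τ => Ω), φ (W s τ) ≤ K ^ τ * φ x₀ := by
  induction τ generalizing x₀ with
  | zero => simp [hW0]
  | succ n ih =>
    have hsplit : Fintype.piFinset (fun _ : Fin (n + 1) => Ω) =
        (Ω ×ˢ Fintype.piFinset (fun _ : Fin n => Ω)).map
          (Fin.consEquiv fun _ => β).toEmbedding := by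
      simpa [Fin.tail_def] using
        filter_piFinset_eq_map_consEquiv (fun _ : Fin (n + 1) => Ω) (fun _ => True)
    rw [hsplit, sum_map, sum_product]
    calc ∑ J ∈ Ω, ∑ s ∈ Fintype.piFinset (fun _ : Fin n => Ω),
          φ (W ((Fin.consEquiv fun _ => β) (J, s)) (n + 1))
        ≤ ∑ J ∈ Ω, K ^ n * φ (step J x₀) := sum_le_sum fun J _ =>
          ih (step J x₀) (fun s k => W (Fin.cons J s) (k + 1))
            (fun s => by simp [hWsucc _ 0 n.succ_pos, hW0])
            (fun s k hk => by rw [hWsucc _ (k + 1) (Nat.succ_lt_succ hk)]; rfl)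
      _ ≤ K ^ n * (K * φ x₀) := by
        rw [← mul_sum]
        exact mul_le_mul_of_nonneg_left (hstep x₀) (pow_nonneg hK n)
      _ = K ^ (n + 1) * φ x₀ := by ring

theorem add_mul_div_le_two_mul_exp_sq_add {n b : ℕ} (hb : 1 ≤ b) (hbn : b ≤ n) {L Λ : ℝ}
    (hL : 0 ≤ L) (hΛ : 0 ≤ Λ) :
    L + n * Λ / b ≤ 2 * (Real.exp 1 ^ 2 * L + n * Real.log (2 * n ^ 2 / b) / b * Λ) := by
  have hb' : (0 : ℝ) < b := by exact_mod_cast hb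
  have hexp : 1 ≤ Real.exp 1 ^ 2 := one_le_pow₀ (Real.one_le_exp zero_le_one)
  have hlog : 1 / 2 ≤ Real.log (2 * n ^ 2 / b) := by
    have h2 : (2 : ℝ) ≤ 2 * n ^ 2 / b := by
      have : (b : ℝ) ≤ n ^ 2 := by exact_mod_cast hbn.trans (Nat.le_self_pow two_ne_zero n)
      rw [le_div_iff₀ hb']
      linarith
    linarith [Real.log_two_gt_d9, Real.log_le_log two_pos h2]
  calc L + n * Λ / b = L * 1 + n * Λ / b * 1 := by ring
    _ ≤ L * (2 * Real.exp 1 ^ 2) + n * Λ / b * (2 * Real.log (2 * n ^ 2 / b)) := by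
      gcongr <;> linarith
    _ = _ := by ring

theorem bcd_rate_Leff_general {d b : ℕ} (hb : 1 ≤ b) (hbd : b ≤ d)
    (H : Matrix (Fin d) (Fin d) ℝ) (m L : ℝ) (hm : 0 < m) (hmL : m ≤ L)
    (hlow : ((H - m • (1 : Matrix (Fin d) (Fin d) ℝ))).PosSemidef)
    (hup : ((L • (1 : Matrix (Fin d) (Fin d) ℝ) - H)).PosSemidef)
    (c : Fin d → ℝ) (r : ℝ) (f : (Fin d → ℝ) → ℝ)
    (hf : ∀ w, f w = (1 / 2) * (w ⬝ᵥ H.mulVec w) + c ⬝ᵥ w + r)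
    (Ωb : Finset (Finset (Fin d))) (hΩb : Ωb = Finset.powersetCard b Finset.univ)
    -- exact block minimization step
    (step : Finset (Fin d) → (Fin d → ℝ) → (Fin d → ℝ))
    (hstep_min : ∀ I w (v : Fin d → ℝ),
      f (step I w) ≤ f (fun i => if i ∈ I then v i else w i))
    -- iterates along a sequence of blocks
    (τ : ℕ) (w0 : Fin d → ℝ)
    (W : (Fin τ → Finset (Fin d)) → ℕ → (Fin d → ℝ))
    (hW0 : ∀ s, W s 0 = w0)
    (hWsucc : ∀ s k (h : k < τ), W s (k + 1) = step (s ⟨k, h⟩) (W s k))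
    (fstar : ℝ) (hstar : IsGLB (Set.range f) fstar)
    (Leff : ℝ)
    (hLeff : Leff = (Real.exp 1) ^ 2 * L +
      ((d : ℝ) * Real.log (2 * (d : ℝ) ^ 2 / b) / b) *
        sSup (Set.range fun i : Fin d => |H i i|)) :
    (1 / (Ωb.card : ℝ) ^ τ) *
        ∑ s ∈ Fintype.piFinset (fun _ : Fin τ => Ωb), (f (W s τ) - fstar) ≤
      (1 - m / (2 * Leff)) ^ τ * (f w0 - fstar) := by
  obtain rfl : f = quadratic H c r := funext hf
  subst hΩb
  set Λ := sSup (Set.range fun i : Fin d => |H i i|)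
  have hΛ : 0 ≤ Λ := Real.sSup_nonneg (Set.forall_mem_range.2 fun i => abs_nonneg _)
  have hdiag : ∀ i, H i i ≤ Λ := fun i =>
    (le_abs_self _).trans (le_csSup (Set.finite_range _).bddAbove ⟨i, rfl⟩)
  have hL : 0 < L := hm.trans_le hmL
  have hLeff' : L + d * Λ / b ≤ 2 * Leff :=
    hLeff ▸ add_mul_div_le_two_mul_exp_sq_add hb hbd hL.le hΛ
  have hN : (0 : ℝ) < d.choose b := Nat.cast_pos.2 (Nat.choose_pos hbd)
  have hΛb : 0 ≤ d * Λ / b := by positivity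
  have hrate : 0 ≤ 1 - m / (2 * Leff) := by
    rw [sub_nonneg, div_le_one (by linarith)]
    linarith
  have hcontract : ∀ w, ∑ J ∈ powersetCard b univ, (quadratic H c r (step J w) - fstar) ≤
      (d.choose b * (1 - m / (2 * Leff))) * (quadratic H c r w - fstar) := fun w => by
    refine (sum_powersetCard_quadratic_sub_le hb (by simpa using hbd) hm hL hΛ hlow hup hdiag
      hstar w (fun J => step J w) (fun J => hstep_min J w)).trans ?_
    simp only [Fintype.card_fin]
    gcongr
    exact sub_nonneg.2 (hstar.1 ⟨w, rfl⟩)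
  have hiter := sum_piFinset_le_pow_mul _ step (fun w => quadratic H c r w - fstar)
    (by positivity) hcontract τ w0 W hW0 hWsucc
  rw [card_powersetCard, card_univ, Fintype.card_fin]
  calc _ ≤ 1 / (d.choose b : ℝ) ^ τ *
        ((d.choose b * (1 - m / (2 * Leff))) ^ τ * (quadratic H c r w0 - fstar)) := by gcongr
    _ = _ := by
      rw [mul_pow]
      field_simp

/-- Theorem 1: randomized block coordinate descent on a quadratic with Hessian
`H` satisfying `m I ⪯ H ⪯ L I` converges linearly at rate `1 - m/(2 L_eff)`,
where `L_eff = e² L + (d log(2d²/b)/b) ‖diag(H)‖_∞`.  The expectation over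
i.i.d. uniform size-`b` blocks is written as an average over block sequences. -/
theorem bcd_rate_Leff {d b : ℕ} (hd : 0 < d) (hb : 1 ≤ b) (hbd : b ≤ d)
    (H : Matrix (Fin d) (Fin d) ℝ) (m L : ℝ) (hm : 0 < m) (hmL : m ≤ L)
    (hlow : ((H - m • (1 : Matrix (Fin d) (Fin d) ℝ))).PosSemidef)
    (hup : ((L • (1 : Matrix (Fin d) (Fin d) ℝ) - H)).PosSemidef)
    (c : Fin d → ℝ) (r : ℝ) (f : (Fin d → ℝ) → ℝ)
    (hf : ∀ w, f w = (1 / 2) * (w ⬝ᵥ H.mulVec w) + c ⬝ᵥ w + r)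
    (Ωb : Finset (Finset (Fin d))) (hΩb : Ωb = Finset.powersetCard b Finset.univ)
    -- exact block minimization step
    (step : Finset (Fin d) → (Fin d → ℝ) → (Fin d → ℝ))
    (hstep_fix : ∀ I w i, i ∉ I → step I w i = w i)
    (hstep_min : ∀ I w (v : Fin d → ℝ),
      f (step I w) ≤ f (fun i => if i ∈ I then v i else w i))
    -- iterates along a sequence of blocks
    (τ : ℕ) (w0 : Fin d → ℝ)
    (W : (Fin τ → Finset (Fin d)) → ℕ → (Fin d → ℝ))
    (hW0 : ∀ s, W s 0 = w0)
    (hWsucc : ∀ s k (h : k < τ), W s (k + 1) = step (s ⟨k, h⟩) (W s k))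
    (fstar : ℝ) (hstar : IsGLB (Set.range f) fstar)
    (Leff : ℝ)
    (hLeff : Leff = (Real.exp 1) ^ 2 * L +
      ((d : ℝ) * Real.log (2 * (d : ℝ) ^ 2 / b) / b) *
        sSup (Set.range fun i : Fin d => |H i i|)) :
    (1 / (Ωb.card : ℝ) ^ τ) *
        ∑ s ∈ Fintype.piFinset (fun _ : Fin τ => Ωb), (f (W s τ) - fstar) ≤
      (1 - m / (2 * Leff)) ^ τ * (f w0 - fstar) :=
  bcd_rate_Leff_general hb hbd H m L hm hmL hlow hup c r f hf Ωb hΩb step hstep_min τ w0 W hW0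
    hWsucc fstar hstar Leff hLeff
end

section
/- Let Q_I := (1/t) P_I 1_{I∈𝒢} + (1/L) P_I 1_{I∉𝒢} where 0 < t ≤ L, P_I is the coordinate projection onto I ⊆ {1,...,d} with |I| = b, and 𝒢 ⊆ Ω_b with |𝒢^c|/|Ω_b| = α b/d, α ∈ [0,1]. If I is drawn uniformly from Ω_b, then λ_min(E Q_I) ≥ (b/d)((1−α)/t + α/L). -/
/-!
`E Q_I` is the diagonal matrix whose `i`-th entry averages the weight of `Q_I` over the sets
`I ∋ i`. Each weight is `1/t`, lowered by `1/t - 1/L` when `I ∉ 𝒢`; a fraction `b/d` of all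
`I` contain `i`, and at most `|𝒢ᶜ| = α (b/d) |Ω_b|` of them carry the lowered weight, which gives
the bound on every diagonal entry and hence on `λ_min`.
-/

open Matrix Finset

/-- Smallest eigenvalue of a real square matrix. -/
noncomputable def lamMin {ι : Type*} [Fintype ι] [DecidableEq ι]
    (A : Matrix ι ι ℝ) : ℝ :=
  sInf {μ : ℝ | Module.End.HasEigenvalue (Matrix.toLin' A) μ}

lemma le_lamMin_diagonal {ι : Type*} [Fintype ι] [DecidableEq ι] [Nonempty ι]
    {g : ι → ℝ} {c : ℝ} (h : ∀ i, c ≤ g i) : c ≤ lamMin (diagonal g) := by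
  have hspec : {μ | Module.End.HasEigenvalue (toLin' (diagonal g)) μ} = Set.range g := by
    ext μ
    exact hasEigenvalue_toLin'_diagonal_iff g
  rw [lamMin, hspec]
  exact le_csInf (Set.range_nonempty g) (Set.forall_mem_range.2 h)

lemma sum_smul_proj {ι : Type*} [Fintype ι] [DecidableEq ι] (s : Finset (Finset ι))
    (w : Finset ι → ℝ) :
    ∑ I ∈ s, w I • proj I = diagonal fun i => ∑ I ∈ s with i ∈ I, w I := by
  ext i j
  rcases eq_or_ne i j with rfl | hij <;> simp [proj, Matrix.sum_apply, sum_filter, *]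

lemma sum_ite_mem_eq_card_nsmul_sub {α M : Type*} [DecidableEq α] [AddCommGroup M] (F G : Finset α) (a c : M) :
    ∑ I ∈ F, (if I ∈ G then a else c) = #F • a - #(F \ G) • (a - c) := by
  rw [sum_ite, sum_const, sum_const, filter_notMem_eq_sdiff,
    ← card_filter_add_card_filter_not (s := F) (· ∈ G), filter_notMem_eq_sdiff, add_nsmul,
    nsmul_sub]
  abel

lemma card_filter_mem_powersetCard_mul_card {α : Type*} [DecidableEq α] {s : Finset α} {i : α}
    (hi : i ∈ s) {b : ℕ} (hb : 1 ≤ b) :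
    #{I ∈ s.powersetCard b | i ∈ I} * #s = b * #(s.powersetCard b) := by
  obtain ⟨m, hm⟩ : ∃ m, #s = m + 1 := Nat.exists_eq_add_one.2 (card_pos.2 ⟨i, hi⟩)
  obtain ⟨k, rfl⟩ : ∃ k, b = k + 1 := Nat.exists_eq_add_one.2 hb
  simp only [← singleton_subset_iff]
  rw [card_filter_powersetCard_subset _ _ _ (singleton_subset_iff.2 hi) (by simp),
    card_powersetCard, card_singleton, hm, Nat.add_sub_cancel, Nat.add_sub_cancel, mul_comm,
    Nat.add_one_mul_choose_eq, mul_comm]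

theorem lamMin_expected_Q_general {d b : ℕ} (hb : 1 ≤ b) (hbd : b ≤ d)
    (t L : ℝ) (ht : 0 < t) (htL : t ≤ L)
    (Ωb : Finset (Finset (Fin d))) (hΩb : Ωb = Finset.powersetCard b Finset.univ)
    (𝒢 : Finset (Finset (Fin d))) (α : ℝ)
    (hfrac : ((Ωb \ 𝒢).card : ℝ) = α * (b / d) * Ωb.card)
    (Q : Finset (Fin d) → Matrix (Fin d) (Fin d) ℝ)
    (hQ : ∀ I, Q I = if I ∈ 𝒢 then (1 / t) • proj I else (1 / L) • proj I) :
    (b / d : ℝ) * ((1 - α) / t + α / L) ≤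
      lamMin ((Ωb.card : ℝ)⁻¹ • ∑ I ∈ Ωb, Q I) := by
  have : Nonempty (Fin d) := ⟨⟨0, by omega⟩⟩
  have hd : (0 : ℝ) < d := by exact_mod_cast (show 0 < d by omega)
  have hΩ : (0 : ℝ) < #Ωb := by
    rw [hΩb, card_powersetCard, card_univ, Fintype.card_fin]
    exact_mod_cast Nat.choose_pos hbd
  have hLt : L⁻¹ ≤ t⁻¹ := inv_anti₀ ht htL
  simp only [hQ, ← ite_smul, sum_smul_proj, ← diagonal_smul]
  refine le_lamMin_diagonal fun i => ?_
  set F := {I ∈ Ωb | i ∈ I}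
  have hF : (#F : ℝ) = b / d * #Ωb := by
    have h := card_filter_mem_powersetCard_mul_card (mem_univ i) hb
    rw [card_univ, Fintype.card_fin, ← hΩb] at h
    rw [div_mul_eq_mul_div, eq_div_iff hd.ne']
    exact_mod_cast h
  have hFG : (#(F \ 𝒢) : ℝ) ≤ α * (b / d) * #Ωb := by
    rw [← hfrac]
    exact_mod_cast card_le_card (sdiff_subset_sdiff (filter_subset _ _) le_rfl)
  rw [Pi.smul_apply, smul_eq_mul, sum_ite_mem_eq_card_nsmul_sub, nsmul_eq_mul, nsmul_eq_mul,
    one_div, one_div]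
  calc (b / d : ℝ) * ((1 - α) / t + α / L)
      = (#Ωb : ℝ)⁻¹ * (#F * t⁻¹ - α * (b / d) * #Ωb * (t⁻¹ - L⁻¹)) := by
        rw [hF]; field_simp; ring
    _ ≤ (#Ωb : ℝ)⁻¹ * (#F * t⁻¹ - #(F \ 𝒢) * (t⁻¹ - L⁻¹)) := by
        gcongr

/-- For `Q_I = (1/t) P_I 1_{I∈𝒢} + (1/L) P_I 1_{I∉𝒢}` with `0 < t ≤ L`, `I`
uniform on the size-`b` subsets `Ω_b`, and `|𝒢ᶜ|/|Ω_b| = α b/d`, the minimum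
eigenvalue of `E Q_I` is at least `(b/d)((1-α)/t + α/L)`. -/
theorem lamMin_expected_Q {d b : ℕ} (hb : 1 ≤ b) (hbd : b ≤ d)
    (t L : ℝ) (ht : 0 < t) (htL : t ≤ L)
    (Ωb : Finset (Finset (Fin d))) (hΩb : Ωb = Finset.powersetCard b Finset.univ)
    (𝒢 : Finset (Finset (Fin d))) (h𝒢 : 𝒢 ⊆ Ωb)
    (α : ℝ) (hα0 : 0 ≤ α) (hα1 : α ≤ 1)
    (hfrac : ((Ωb \ 𝒢).card : ℝ) = α * (b / d) * Ωb.card)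
    (Q : Finset (Fin d) → Matrix (Fin d) (Fin d) ℝ)
    (hQ : ∀ I, Q I = if I ∈ 𝒢 then (1 / t) • proj I else (1 / L) • proj I) :
    (b / d : ℝ) * ((1 - α) / t + α / L) ≤
      lamMin ((Ωb.card : ℝ)⁻¹ • ∑ I ∈ Ωb, Q I) :=
  lamMin_expected_Q_general hb hbd t L ht htL Ωb hΩb 𝒢 α hfrac Q hQ
end
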